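/- Suppose 𝒜 = {0, 1, …, p} ∪ {q₁, …, q_l} ∪ {α}, where 1 ≤ p < q₁ < ⋯ < q_l = α − 1 and p ≥ α − q₁. Then r(𝒜) = reg(𝒜), where r(𝒜) := min{r ∈ ℕ : (r+1)𝒜 = {0, α} + r𝒜} and reg(𝒜) := min{m ≥ 1 : m𝒜 is full}. -/

import Mathlib

open scoped Pointwise

/-- The `m`-fold sumset of a finite set `A ⊆ ℕ`, with `0 • A = {0}`. -/
def sumset (A : Finset ℕ) : ℕ → Finset ℕ
  | 0 => {0}
  | m + 1 => sumset A m + A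

/-- A subset of `ℕ` is full iff it equals `{0, 1, …, n}` for some `n`. -/
def IsFull (B : Finset ℕ) : Prop := ∃ n : ℕ, B = Finset.Iic n

/-- `{i, …, j}` is a gap of `B`: disjoint from `B`, with `i - 1 ∈ B` and `j + 1 ∈ B`. -/
def IsGap (B : Finset ℕ) (i j : ℕ) : Prop :=
  1 ≤ i ∧ i ≤ j ∧ (∀ k, i ≤ k → k ≤ j → k ∉ B) ∧ i - 1 ∈ B ∧ j + 1 ∈ B

/-- `λ(B)`: the maximal length of a gap of `B` (`0` if there are no gaps). -/
noncomputable def gapLen (B : Finset ℕ) : ℕ :=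
  sSup {n | ∃ i j, IsGap B i j ∧ n = j - i + 1}

/-- Property `(P₁)`. -/
def P1 (A : Finset ℕ) (α : ℕ) : Prop :=
  ∀ m : ℕ, ¬ IsFull (sumset A m) → ¬ IsFull (sumset A m + ({0, α} : Finset ℕ))

/-- Property `(P₂)`. -/
def P2 (A : Finset ℕ) (α : ℕ) : Prop :=
  ∀ m : ℕ, ¬ IsFull (sumset A m) →
    ¬ ((∀ k, k ≤ α → k ∈ sumset A m) ∧
       (∀ k, (m - 1) * α ≤ k → k ≤ m * α → k ∈ sumset A m))

/-- The combinatorial reduction number `r(𝒜)`. -/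
noncomputable def rA (A : Finset ℕ) (α : ℕ) : ℕ :=
  sInf {r : ℕ | sumset A (r + 1) = ({0, α} : Finset ℕ) + sumset A r}

/-- The combinatorial regularity `reg(𝒜)`. -/
noncomputable def regA (A : Finset ℕ) : ℕ :=
  sInf {m : ℕ | 1 ≤ m ∧ IsFull (sumset A m)}

/-!
If `m𝒜` is full (`m ≥ 1`), then `(m+1)𝒜 = {0, α} + m𝒜` is full as well, so `r(𝒜) ≤ reg(𝒜)`.
Conversely, once `(r+1)𝒜 = {0, α} + r𝒜` it propagates to `(r+i+1)𝒜 = {0, α} + (r+i)𝒜`, hence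
`(r+i)𝒜 = {0, α, …, iα} + r𝒜`; comparing with a full `(r+i)𝒜` shows that `r𝒜` contains its top
interval `[(r-1)α, rα]`. That already makes `r𝒜` full: write `y = jα + t` below the top interval.
Either `t ≤ (r-j)p`, so `y ∈ jα + (r-j)·{0,…,p}`, or `y + (r-j-1)q₁` falls into the top interval
(this is where `α - q₁ ≤ p` enters); there each summand exceeds `p`, so lies in `[q₁, q₁ + p]`,
and lowering `r-j-1` of them by `q₁` stays inside `{0,…,p} ⊆ 𝒜`.
-/

section Sumset

variable {A : Finset ℕ} {α : ℕ}

lemma sumset_add (A : Finset ℕ) (m n : ℕ) : sumset A (m + n) = sumset A m + sumset A n := by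
  induction n with
  | zero => exact (add_zero _).symm
  | succ n ih =>
    change sumset A (m + n) + A = _
    rw [ih, add_assoc]
    rfl

lemma zero_mem_sumset (h0 : 0 ∈ A) (m : ℕ) : 0 ∈ sumset A m := by
  induction m with
  | zero => exact Finset.mem_singleton_self 0
  | succ m ih => exact Finset.add_mem_add ih h0

lemma mul_mem_sumset {a : ℕ} (ha : a ∈ A) (j : ℕ) : j * a ∈ sumset A j := by
  induction j with
  | zero => simp [sumset]
  | succ j ih => rw [Nat.succ_mul]; exact Finset.add_mem_add ih ha

lemma le_mul_of_mem_sumset (hle : ∀ a ∈ A, a ≤ α) {m x : ℕ} (hx : x ∈ sumset A m) :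
    x ≤ m * α := by
  induction m generalizing x with
  | zero => simp_all [sumset]
  | succ m ih =>
    obtain ⟨w, hw, a, ha, rfl⟩ := Finset.mem_add.mp hx
    have := ih hw
    have := hle a ha
    rw [Nat.succ_mul]
    omega

lemma mem_sumset_of_le_mul {p : ℕ} (hsmall : ∀ b ≤ p, b ∈ A) {k b : ℕ} (hb : b ≤ k * p) :
    b ∈ sumset A k := by
  induction k generalizing b with
  | zero => simp_all [sumset]
  | succ k ih =>
    rw [Nat.succ_mul] at hb
    obtain ⟨c, d, rfl, hc, hd⟩ : ∃ c d, b = c + d ∧ c ≤ k * p ∧ d ≤ p :=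
      ⟨b - min b p, min b p, by omega, by omega, min_le_right b p⟩
    exact Finset.add_mem_add (ih hc) (hsmall d hd)

lemma sumset_eq_Iic_of_isFull (hα : α ∈ A) (hle : ∀ a ∈ A, a ≤ α) {m : ℕ}
    (h : IsFull (sumset A m)) : sumset A m = Finset.Iic (m * α) := by
  obtain ⟨n, hn⟩ := h
  have h₁ : m * α ≤ n := by simpa [hn] using mul_mem_sumset hα m
  have h₂ : n ≤ m * α := le_mul_of_mem_sumset hle (by simp [hn])
  rw [hn, le_antisymm h₂ h₁]

lemma pair_add_Iic {n : ℕ} (h : α ≤ n) :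
    ({0, α} : Finset ℕ) + Finset.Iic n = Finset.Iic (n + α) := by
  ext x
  simp only [Finset.mem_add, Finset.mem_insert, Finset.mem_singleton, Finset.mem_Iic]
  constructor
  · rintro ⟨b, rfl | rfl, c, hc, rfl⟩ <;> omega
  · intro hx
    by_cases hxn : x ≤ n
    · exact ⟨0, Or.inl rfl, x, hxn, zero_add x⟩
    · exact ⟨α, Or.inr rfl, x - α, by omega, by omega⟩

lemma sumset_succ_eq_of_eq_Iic (h0 : 0 ∈ A) (hα : α ∈ A) (hle : ∀ a ∈ A, a ≤ α) {m : ℕ}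
    (hm : 1 ≤ m) (h : sumset A m = Finset.Iic (m * α)) :
    sumset A (m + 1) = ({0, α} : Finset ℕ) + sumset A m := by
  refine Finset.Subset.antisymm (fun x hx => ?_) ?_
  · rw [h, pair_add_Iic (Nat.le_mul_of_pos_left α hm), ← Nat.succ_mul]
    exact Finset.mem_Iic.mpr (le_mul_of_mem_sumset hle hx)
  · rw [add_comm]
    exact Finset.add_subset_add_left (Finset.insert_subset h0 (Finset.singleton_subset_iff.mpr hα))

lemma sumset_add_eq_Iic (h0 : 0 ∈ A) (hα : α ∈ A) (hle : ∀ a ∈ A, a ≤ α) {m : ℕ}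
    (hm : 1 ≤ m) (h : sumset A m = Finset.Iic (m * α)) (n : ℕ) :
    sumset A (m + n) = Finset.Iic ((m + n) * α) := by
  induction n with
  | zero => exact h
  | succ n ih =>
    rw [← add_assoc, sumset_succ_eq_of_eq_Iic h0 hα hle (by omega) ih, ih,
      pair_add_Iic (Nat.le_mul_of_pos_left α (by omega)), Nat.succ_mul]

lemma sub_mem_sumset (hα : α ∈ A) (hα1 : α - 1 ∈ A) {m i : ℕ} (hi : i ≤ m) :
    m * α - i ∈ sumset A m := by
  have hmem := Finset.add_mem_add (mul_mem_sumset hα (m - i)) (mul_mem_sumset hα1 i)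
  rw [← sumset_add, Nat.sub_add_cancel hi] at hmem
  convert hmem using 1
  rcases Nat.eq_zero_or_pos α with rfl | hpos
  · simp
  · have := Nat.mul_le_mul_right α hi
    have := Nat.le_mul_of_pos_right i hpos
    rw [Nat.sub_mul, Nat.mul_sub_one]
    omega

end Sumset

section Reduction

variable {A : Finset ℕ} {α r : ℕ}

lemma sumset_succ_eq_of_reduction (h : sumset A (r + 1) = ({0, α} : Finset ℕ) + sumset A r)
    (i : ℕ) : sumset A (r + i + 1) = ({0, α} : Finset ℕ) + sumset A (r + i) := by
  rw [add_right_comm, sumset_add, h, add_assoc, ← sumset_add]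

lemma exists_eq_mul_add_of_reduction
    (h : sumset A (r + 1) = ({0, α} : Finset ℕ) + sumset A r) {i x : ℕ}
    (hx : x ∈ sumset A (r + i)) : ∃ k ≤ i, ∃ y ∈ sumset A r, x = k * α + y := by
  induction i generalizing x with
  | zero => exact ⟨0, le_rfl, x, hx, by simp⟩
  | succ i ih =>
    rw [← add_assoc, sumset_succ_eq_of_reduction h] at hx
    obtain ⟨b, hb, w, hw, rfl⟩ := Finset.mem_add.mp hx
    obtain ⟨k, hk, y, hy, rfl⟩ := ih hw
    rcases Finset.mem_insert.mp hb with rfl | hb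
    · exact ⟨k, by omega, y, hy, by ring⟩
    · rw [Finset.mem_singleton.mp hb]
      exact ⟨k + 1, by omega, y, hy, by ring⟩

lemma sumset_one_ne_pair_add (h1 : 1 ∈ A) (hα_ne : α ≠ 1) :
    sumset A 1 ≠ ({0, α} : Finset ℕ) + sumset A 0 := by
  intro h
  have hmem : 0 + 1 ∈ sumset A 1 := Finset.add_mem_add (Finset.mem_singleton_self 0) h1
  rw [h] at hmem
  simp [sumset, Finset.mem_add] at hmem
  omega

lemma mem_sumset_of_reduction (h0 : 0 ∈ A) (hα : α ∈ A) (hle : ∀ a ∈ A, a ≤ α)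
    (h : sumset A (r + 1) = ({0, α} : Finset ℕ) + sumset A r) (hr : 1 ≤ r) {n : ℕ}
    (hfull : sumset A (n + r) = Finset.Iic ((n + r) * α)) {x : ℕ} (hx₁ : (r - 1) * α ≤ x)
    (hx₂ : x ≤ r * α) : x ∈ sumset A r := by
  have hmem : x + n * α ∈ sumset A (r + n) := by
    rw [add_comm r, hfull, Finset.mem_Iic, Nat.add_mul]
    omega
  obtain ⟨k, hk, y, hy, hxy⟩ := exists_eq_mul_add_of_reduction h hmem
  rcases hk.eq_or_lt with rfl | hk
  · simpa [show x = y by omega] using hy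
  · -- `y = x + (n - k) * α ≤ r * α` forces `x = (r - 1) * α`
    obtain ⟨s, rfl⟩ : ∃ s, r = s + 1 := ⟨r - 1, by omega⟩
    have hy_le := le_mul_of_mem_sumset hle hy
    have hkn := Nat.mul_le_mul_right α (show k + 1 ≤ n by omega)
    rw [Nat.succ_mul] at hkn hy_le
    rw [Nat.add_sub_cancel] at hx₁
    rw [show x = s * α + 0 by omega]
    exact Finset.add_mem_add (mul_mem_sumset hα s) h0

end Reduction

section LargeElements

variable {A : Finset ℕ} {α p q : ℕ}

lemma exists_mem_sumset_eq_add_mul (hsmall : ∀ b ≤ p, b ∈ A) (hle : ∀ a ∈ A, a ≤ α)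
    (hlarge : ∀ a ∈ A, p < a → q ≤ a) (hqp : α ≤ q + p) {m k x : ℕ} (hk : k ≤ m)
    (hx : x ∈ sumset A m) (hgt : m * α + p < x + α) : ∃ y ∈ sumset A m, x = y + k * q := by
  induction m generalizing k x with
  | zero => exact ⟨x, hx, by simp [Nat.le_zero.mp hk]⟩
  | succ m ih =>
    obtain ⟨w, hw, a, ha, rfl⟩ := Finset.mem_add.mp hx
    have hw_le := le_mul_of_mem_sumset hle hw
    have ha_le := hle a ha
    rw [Nat.succ_mul] at hgt
    have hqa := hlarge a ha (by omega)
    rcases k with _ | k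
    · exact ⟨w + a, hx, by simp⟩
    · obtain ⟨y, hy, rfl⟩ := ih (k := k) (by omega) hw (by omega)
      exact ⟨y + (a - q), Finset.add_mem_add hy (hsmall _ (by omega)), by rw [Nat.succ_mul]; omega⟩

lemma sumset_eq_Iic_of_top (hsmall : ∀ b ≤ p, b ∈ A) (hα : α ∈ A) (hle : ∀ a ∈ A, a ≤ α)
    (hlarge : ∀ a ∈ A, p < a → q ≤ a) (hqp : α ≤ q + p) (hq : q ≤ α) {m : ℕ}
    (htop : ∀ x, (m - 1) * α ≤ x → x ≤ m * α → x ∈ sumset A m) :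
    sumset A m = Finset.Iic (m * α) := by
  refine Finset.Subset.antisymm (fun x hx => Finset.mem_Iic.mpr (le_mul_of_mem_sumset hle hx))
    fun y hy => ?_
  rw [Finset.mem_Iic] at hy
  by_cases hy_top : (m - 1) * α ≤ y
  · exact htop y hy_top hy
  have hα_pos : 0 < α := Nat.pos_of_ne_zero fun h => by simp [h] at hy_top
  obtain ⟨j, t, rfl, ht⟩ : ∃ j t, y = j * α + t ∧ t < α :=
    ⟨y / α, y % α, (Nat.div_add_mod' y α).symm, Nat.mod_lt y hα_pos⟩
  have hj : j < m - 1 := by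
    by_contra! h
    have := Nat.mul_le_mul_right α h
    omega
  obtain ⟨i, rfl⟩ : ∃ i, m = j + i + 1 := ⟨m - 1 - j, by omega⟩
  by_cases ht_small : t ≤ (i + 1) * p
  · have := Finset.add_mem_add (mul_mem_sumset hα j) (mem_sumset_of_le_mul hsmall ht_small)
    rwa [← sumset_add, ← add_assoc] at this
  -- otherwise `y + i * q` lies in the top interval and every summand of it exceeds `p`
  have hm_mul : (j + i + 1) * α = j * α + i * α + α := by ring
  have hm_sub : (j + i + 1 - 1) * α = j * α + i * α := by rw [Nat.add_sub_cancel, Nat.add_mul]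
  have hiα : i * α ≤ i * q + i * p := by rw [← Nat.mul_add]; exact Nat.mul_le_mul_left i hqp
  have hiq : i * q ≤ i * α := Nat.mul_le_mul_left i hq
  rw [Nat.succ_mul] at ht_small
  obtain ⟨y, hy, hyq⟩ := exists_mem_sumset_eq_add_mul hsmall hle hlarge hqp (k := i) (by omega)
    (htop (j * α + t + i * q) (by omega) (by omega)) (by omega)
  rwa [Nat.add_right_cancel hyq]

lemma sumset_self_eq_Iic (hsmall : ∀ b ≤ p, b ∈ A) (hα : α ∈ A) (hα1 : α - 1 ∈ A)
    (hle : ∀ a ∈ A, a ≤ α) (hlarge : ∀ a ∈ A, p < a → q ≤ a) (hqp : α ≤ q + p) (hq : q ≤ α) :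
    sumset A α = Finset.Iic (α * α) :=
  sumset_eq_Iic_of_top hsmall hα hle hlarge hqp hq fun x hx₁ hx₂ => by
    have := sub_mem_sumset hα hα1 (m := α) (i := α * α - x) (by rw [Nat.sub_one_mul] at hx₁; omega)
    rwa [Nat.sub_sub_self hx₂] at this

end LargeElements

lemma regA_spec {A : Finset ℕ} {α : ℕ} (hα : α ∈ A) (hle : ∀ a ∈ A, a ≤ α)
    (h : ∃ m, 1 ≤ m ∧ IsFull (sumset A m)) :
    1 ≤ regA A ∧ sumset A (regA A) = Finset.Iic (regA A * α) := by
  obtain ⟨h1, hfull⟩ : 1 ≤ regA A ∧ IsFull (sumset A (regA A)) := Nat.sInf_mem h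
  exact ⟨h1, sumset_eq_Iic_of_isFull hα hle hfull⟩

lemma sumset_rA_succ {A : Finset ℕ} {α r : ℕ}
    (h : sumset A (r + 1) = ({0, α} : Finset ℕ) + sumset A r) :
    sumset A (rA A α + 1) = ({0, α} : Finset ℕ) + sumset A (rA A α) :=
  Nat.sInf_mem (s := {r | sumset A (r + 1) = ({0, α} : Finset ℕ) + sumset A r}) ⟨r, h⟩

/-- If `𝒜 = {0,…,p} ∪ {q₁,…,q_l} ∪ {α}` with `1 ≤ p < q₁ < ⋯ < q_l = α − 1` and
`p ≥ α − q₁`, then `r(𝒜) = reg(𝒜)`. -/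
theorem stmt_16 (𝒜 Q : Finset ℕ) (p α : ℕ) (hQne : Q.Nonempty)
    (h𝒜 : 𝒜 = Finset.Iic p ∪ Q ∪ {α})
    (hp : 1 ≤ p)
    (hQ : ∀ q ∈ Q, p < q ∧ q ≤ α)
    (hQmax : Q.max' hQne = α - 1)
    (hpq : α - Q.min' hQne ≤ p) :
    rA 𝒜 α = regA 𝒜 := by
  set q := Q.min' hQne
  have hα1Q : α - 1 ∈ Q := hQmax ▸ Q.max'_mem hQne
  have hpα := (hQ _ hα1Q).1
  have hq : q ≤ α - 1 := Q.min'_le _ hα1Q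
  have hmem : ∀ a, a ∈ 𝒜 ↔ a = α ∨ a ≤ p ∨ a ∈ Q := by simp [h𝒜]
  have h0 : 0 ∈ 𝒜 := (hmem 0).mpr (Or.inr (Or.inl (Nat.zero_le p)))
  have hα : α ∈ 𝒜 := (hmem α).mpr (Or.inl rfl)
  have hα1 : α - 1 ∈ 𝒜 := (hmem _).mpr (Or.inr (Or.inr hα1Q))
  have hsmall : ∀ b ≤ p, b ∈ 𝒜 := fun b hb => (hmem b).mpr (Or.inr (Or.inl hb))
  have hle : ∀ a ∈ 𝒜, a ≤ α := fun a ha => by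
    rcases (hmem a).mp ha with h | h | h
    exacts [h.le, by omega, (hQ a h).2]
  have hlarge : ∀ a ∈ 𝒜, p < a → q ≤ a := fun a ha hpa => by
    rcases (hmem a).mp ha with h | h | h
    exacts [by omega, absurd h (by omega), Q.min'_le a h]
  have hqp : α ≤ q + p := by omega
  obtain ⟨hreg1, hreg⟩ := regA_spec hα hle
    ⟨α, by omega, _, sumset_self_eq_Iic hsmall hα hα1 hle hlarge hqp (by omega)⟩
  have hred_reg := sumset_succ_eq_of_eq_Iic h0 hα hle hreg1 hreg
  have hred := sumset_rA_succ hred_reg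
  have hr1 : 1 ≤ rA 𝒜 α := Nat.one_le_iff_ne_zero.mpr fun h =>
    sumset_one_ne_pair_add (hsmall 1 hp) (by omega) (h ▸ hred)
  refine le_antisymm (Nat.sInf_le hred_reg) (Nat.sInf_le ⟨hr1, rA 𝒜 α * α, ?_⟩)
  exact sumset_eq_Iic_of_top hsmall hα hle hlarge hqp (by omega) fun x hx₁ hx₂ =>
    mem_sumset_of_reduction h0 hα hle hred hr1 (sumset_add_eq_Iic h0 hα hle hreg1 hreg _) hx₁ hx₂
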